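/- arXiv:2405.12410 — 5 statements merged into one kernel-verified Lean document; each statement's English description precedes it below -/
import Mathlib

section
/- Define the star VCSP on 2n+1 Boolean variables indexed by L = {1,…,n}, c = n+1, R = {n+2,…,2n+1}, with fitness f(x) = ∑_{w∈R} [x_c ≠ x_w] + (n+1)·[x_c = 1] + ∑_{u∈L, n-u even} (2n+2)·[x_u = 1 ∧ x_c = 0] + ∑_{u∈L, n-u odd} (2n+2)·[x_u = 1 ∧ x_c = 1] + ∑_{u∈L} [x_u = 1]. Then there exists a strictly fitness-increasing step-sequence starting from the all-zeros assignment of length n² + 4n + 1, where each step increases f by exactly 1. -/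
/-- Fitness of the star VCSP on `2n+1` Boolean variables: left block `L`
at indices `0,…,n-1` (representing `1,…,n`), center `c` at index `n`, and
right block `R` at indices `n+1,…,2n`. -/
def starFitness (n : ℕ) (x : Fin (2 * n + 1) → Bool) : ℤ :=
  (∑ w : Fin n,
      if x ⟨n, by omega⟩ ≠ x ⟨n + 1 + w.val, by have := w.isLt; omega⟩ then 1 else 0)
  + (if x ⟨n, by omega⟩ = true then (n : ℤ) + 1 else 0)
  + (∑ u : Fin n,
      if (n - (u.val + 1)) % 2 = 0 then
        (if x ⟨u.val, by have := u.isLt; omega⟩ = true ∧ x ⟨n, by omega⟩ = false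
          then 2 * (n : ℤ) + 2 else 0)
      else
        (if x ⟨u.val, by have := u.isLt; omega⟩ = true ∧ x ⟨n, by omega⟩ = true
          then 2 * (n : ℤ) + 2 else 0))
  + (∑ u : Fin n, if x ⟨u.val, by have := u.isLt; omega⟩ = true then 1 else 0)

def stState (n : ℕ) (c : Bool) (r l : ℕ) (i : Fin (2*n+1)) : Bool :=
  if i.val < n then decide (n ≤ i.val + l)
  else if i.val = n then c
  else if i.val < n + 1 + r then !c else c

@[simp] lemma st_mid (n : ℕ) (c : Bool) (r l : ℕ) (h : n < 2*n+1) :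
    stState n c r l ⟨n, h⟩ = c := by simp [stState]

@[simp] lemma st_gt (n : ℕ) (c : Bool) (r l w : ℕ) (h : n+1+w < 2*n+1) :
    stState n c r l ⟨n+1+w, h⟩ = if w < r then !c else c := by
  simp only [stState, Fin.val_mk]
  rw [if_neg (by omega), if_neg (by omega)]
  by_cases hw : w < r
  · rw [if_pos (by omega), if_pos hw]
  · rw [if_neg (by omega), if_neg hw]

@[simp] lemma st_lt (n : ℕ) (c : Bool) (r l : ℕ) (u : Fin n) (h : u.val < 2*n+1) :
    stState n c r l ⟨u.val, h⟩ = decide (n ≤ u.val + l) := by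
  simp only [stState, Fin.val_mk]
  rw [if_pos u.isLt]

lemma sum_if_lt (r n : ℕ) : (∑ i ∈ Finset.range n, if i < r then (1:ℤ) else 0) = (min r n : ℕ) := by
  induction n with
  | zero => simp
  | succ m ih =>
    rw [Finset.sum_range_succ, ih]
    split_ifs with h
    · have e1 : min r (m+1) = min r m + 1 := by omega
      rw [e1]; push_cast; ring
    · have e1 : min r (m+1) = min r m := by omega
      rw [e1]; ring

lemma sum_if_even (B : ℤ) (l n : ℕ) :
    (∑ i ∈ Finset.range n, if i % 2 = 0 then (if i < l then B else 0) else 0)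
      = B * ((min l n + 1)/2 : ℕ) := by
  induction n with
  | zero => simp
  | succ m ih =>
    rw [Finset.sum_range_succ, ih]
    by_cases h1 : m % 2 = 0
    · by_cases h2 : m < l
      · rw [if_pos h1, if_pos h2]
        have e1 : (min l (m+1) + 1)/2 = (min l m + 1)/2 + 1 := by omega
        rw [e1]; push_cast; ring
      · rw [if_pos h1, if_neg h2]
        have e1 : (min l (m+1) + 1)/2 = (min l m + 1)/2 := by omega
        rw [e1]; ring
    · rw [if_neg h1]
      have e1 : (min l (m+1) + 1)/2 = (min l m + 1)/2 := by omega
      rw [e1]; ring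

lemma sum_if_odd (B : ℤ) (l n : ℕ) :
    (∑ i ∈ Finset.range n, if i % 2 = 0 then 0 else (if i < l then B else 0))
      = B * ((min l n)/2 : ℕ) := by
  induction n with
  | zero => simp
  | succ m ih =>
    rw [Finset.sum_range_succ, ih]
    by_cases h1 : m % 2 = 0
    · rw [if_pos h1]
      have e1 : (min l (m+1))/2 = (min l m)/2 := by omega
      rw [e1]; ring
    · by_cases h2 : m < l
      · rw [if_neg h1, if_pos h2]
        have e1 : (min l (m+1))/2 = (min l m)/2 + 1 := by omega
        rw [e1]; push_cast; ring
      · rw [if_neg h1, if_neg h2]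
        have e1 : (min l (m+1))/2 = (min l m)/2 := by omega
        rw [e1]; ring

lemma fitness_st (n : ℕ) (c : Bool) (r l : ℕ) (hr : r ≤ n) (hl : l ≤ n) :
    starFitness n (stState n c r l) =
      (r : ℤ) + (if c = true then (n:ℤ)+1 else 0)
      + (2*(n:ℤ)+2) * (((if c = true then l/2 else (l+1)/2) : ℕ) : ℤ) + (l:ℤ) := by
  unfold starFitness
  simp only [st_mid, st_gt, st_lt]
  have T1 : (∑ w : Fin n, if (c ≠ if w.val < r then !c else c) then (1:ℤ) else 0) = (r:ℤ) := by
    have h1 : ∀ w : Fin n, (if (c ≠ if w.val < r then !c else c) then (1:ℤ) else 0)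
        = (fun i => if i < r then (1:ℤ) else 0) w.val := by
      intro w; by_cases h : w.val < r <;> simp [h]
    rw [Finset.sum_congr rfl (fun w _ => h1 w),
      Fin.sum_univ_eq_sum_range (fun i => if i < r then (1:ℤ) else 0) n, sum_if_lt]
    congr 1; omega
  have T4 : (∑ u : Fin n, if decide (n ≤ u.val + l) = true then (1:ℤ) else 0) = (l:ℤ) := by
    have h1 : ∀ u : Fin n, (if decide (n ≤ u.val + l) = true then (1:ℤ) else 0)
        = (fun i => if n ≤ i + l then (1:ℤ) else 0) u.val := by
      intro u; simp
    rw [Finset.sum_congr rfl (fun u _ => h1 u),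
      Fin.sum_univ_eq_sum_range (fun i => if n ≤ i + l then (1:ℤ) else 0) n,
      ← Finset.sum_range_reflect]
    have e : ∀ j ∈ Finset.range n, (fun i => if n ≤ i + l then (1:ℤ) else 0) (n-1-j)
        = if j < l then (1:ℤ) else 0 := by
      intro j hj
      simp only [Finset.mem_range] at hj
      have e2 : (n ≤ n-1-j + l) ↔ j < l := by omega
      simp only [e2]
    rw [Finset.sum_congr rfl e, sum_if_lt]
    congr 1; omega
  rw [T1, T4]
  cases c with
  | false =>
    have T3 : (∑ u : Fin n,
        if (n - (u.val + 1)) % 2 = 0 then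
          (if decide (n ≤ u.val + l) = true ∧ (false:Bool) = false then 2*(n:ℤ)+2 else 0)
        else
          (if decide (n ≤ u.val + l) = true ∧ (false:Bool) = true then 2*(n:ℤ)+2 else 0))
        = (2*(n:ℤ)+2) * (((l+1)/2 : ℕ) : ℤ) := by
      have h1 : ∀ u : Fin n,
          (if (n - (u.val + 1)) % 2 = 0 then
            (if decide (n ≤ u.val + l) = true ∧ (false:Bool) = false then 2*(n:ℤ)+2 else 0)
          else
            (if decide (n ≤ u.val + l) = true ∧ (false:Bool) = true then 2*(n:ℤ)+2 else 0))
          = (fun i => if (n - (i + 1)) % 2 = 0 then (if n ≤ i + l then 2*(n:ℤ)+2 else 0) else 0) u.val := by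
        intro u; simp
      rw [Finset.sum_congr rfl (fun u _ => h1 u),
        Fin.sum_univ_eq_sum_range (fun i => if (n - (i + 1)) % 2 = 0 then (if n ≤ i + l then 2*(n:ℤ)+2 else 0) else 0) n,
        ← Finset.sum_range_reflect]
      have e : ∀ j ∈ Finset.range n,
          (fun i => if (n - (i + 1)) % 2 = 0 then (if n ≤ i + l then 2*(n:ℤ)+2 else 0) else 0) (n-1-j)
          = if j % 2 = 0 then (if j < l then 2*(n:ℤ)+2 else 0) else 0 := by
        intro j hj
        simp only [Finset.mem_range] at hj
        have e1 : n - (n-1-j + 1) = j := by omega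
        have e2 : (n ≤ n-1-j + l) ↔ j < l := by omega
        simp only [e1, e2]
      rw [Finset.sum_congr rfl e, sum_if_even]
      congr 2; omega
    rw [T3]; simp
  | true =>
    have T3 : (∑ u : Fin n,
        if (n - (u.val + 1)) % 2 = 0 then
          (if decide (n ≤ u.val + l) = true ∧ (true:Bool) = false then 2*(n:ℤ)+2 else 0)
        else
          (if decide (n ≤ u.val + l) = true ∧ (true:Bool) = true then 2*(n:ℤ)+2 else 0))
        = (2*(n:ℤ)+2) * ((l/2 : ℕ) : ℤ) := by
      have h1 : ∀ u : Fin n,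
          (if (n - (u.val + 1)) % 2 = 0 then
            (if decide (n ≤ u.val + l) = true ∧ (true:Bool) = false then 2*(n:ℤ)+2 else 0)
          else
            (if decide (n ≤ u.val + l) = true ∧ (true:Bool) = true then 2*(n:ℤ)+2 else 0))
          = (fun i => if (n - (i + 1)) % 2 = 0 then 0 else (if n ≤ i + l then 2*(n:ℤ)+2 else 0)) u.val := by
        intro u; simp
      rw [Finset.sum_congr rfl (fun u _ => h1 u),
        Fin.sum_univ_eq_sum_range (fun i => if (n - (i + 1)) % 2 = 0 then 0 else (if n ≤ i + l then 2*(n:ℤ)+2 else 0)) n,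
        ← Finset.sum_range_reflect]
      have e : ∀ j ∈ Finset.range n,
          (fun i => if (n - (i + 1)) % 2 = 0 then 0 else (if n ≤ i + l then 2*(n:ℤ)+2 else 0)) (n-1-j)
          = if j % 2 = 0 then 0 else (if j < l then 2*(n:ℤ)+2 else 0) := by
        intro j hj
        simp only [Finset.mem_range] at hj
        have e1 : n - (n-1-j + 1) = j := by omega
        have e2 : (n ≤ n-1-j + l) ↔ j < l := by omega
        simp only [e1, e2]
      rw [Finset.sum_congr rfl e, sum_if_odd]
      congr 2; omega
    rw [T3]; simp

lemma diff_right (n : ℕ) (c : Bool) (r l : ℕ) (hr : r < n) (i : Fin (2*n+1)) :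
    stState n c (r+1) l i ≠ stState n c r l i ↔ i = ⟨n+1+r, by omega⟩ := by
  simp only [stState, Fin.ext_iff]
  split_ifs <;> simp <;> omega

lemma diff_left (n : ℕ) (c : Bool) (l : ℕ) (hl : l < n) (i : Fin (2*n+1)) :
    stState n c n (l+1) i ≠ stState n c n l i ↔ i = ⟨n-1-l, by omega⟩ := by
  simp only [stState, Fin.ext_iff]
  split_ifs <;> simp [decide_eq_decide] <;> omega

lemma diff_flip (n : ℕ) (c : Bool) (l : ℕ) (i : Fin (2*n+1)) :
    stState n (!c) 0 l i ≠ stState n c n l i ↔ i = ⟨n, by omega⟩ := by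
  simp only [stState, Fin.ext_iff]
  split_ifs <;> simp <;> omega

lemma step_right (n : ℕ) (c : Bool) (r l : ℕ) (hr : r < n) (hl : l ≤ n) :
    (∃! i, stState n c (r+1) l i ≠ stState n c r l i) ∧
    starFitness n (stState n c (r+1) l) = starFitness n (stState n c r l) + 1 := by
  refine ⟨⟨⟨n+1+r, by omega⟩, (diff_right n c r l hr _).mpr rfl,
    fun i hi => (diff_right n c r l hr i).mp hi⟩, ?_⟩
  rw [fitness_st n c (r+1) l (by omega) hl, fitness_st n c r l (by omega) hl]
  push_cast; ring

lemma step_left (n : ℕ) (c : Bool) (l : ℕ) (hl : l < n) (hc : c = decide (l % 2 = 0)) :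
    (∃! i, stState n c n (l+1) i ≠ stState n c n l i) ∧
    starFitness n (stState n c n (l+1)) = starFitness n (stState n c n l) + 1 := by
  refine ⟨⟨⟨n-1-l, by omega⟩, (diff_left n c l hl _).mpr rfl,
    fun i hi => (diff_left n c l hl i).mp hi⟩, ?_⟩
  rw [fitness_st n c n (l+1) le_rfl (by omega), fitness_st n c n l le_rfl (by omega)]
  subst hc
  by_cases hp : l % 2 = 0
  · simp only [hp, decide_true]
    have e : (l+1)/2 = l/2 := by omega
    simp only [e, if_true]; push_cast; ring
  · have hd : decide (l % 2 = 0) = false := by simp [hp]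
    simp only [hd]
    have e : (l+1+1)/2 = (l+1)/2 := by omega
    simp [e]; push_cast; ring

lemma step_flip (n : ℕ) (c : Bool) (l : ℕ) (hl : l ≤ n) (hc : c = decide (l % 2 = 1)) :
    (∃! i, stState n (!c) 0 l i ≠ stState n c n l i) ∧
    starFitness n (stState n (!c) 0 l) = starFitness n (stState n c n l) + 1 := by
  refine ⟨⟨⟨n, by omega⟩, (diff_flip n c l _).mpr rfl,
    fun i hi => (diff_flip n c l i).mp hi⟩, ?_⟩
  rw [fitness_st n (!c) 0 l (by omega) hl, fitness_st n c n l le_rfl hl]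
  by_cases hp : l % 2 = 1
  · have hc' : c = true := by simp [hc, hp]
    subst hc'
    have e : (l+1)/2 = l/2 + 1 := by omega
    simp only [Bool.not_true]
    simp [e]; push_cast; ring
  · have hc' : c = false := by simp [hc, hp]
    subst hc'
    have e : (l+1)/2 = l/2 := by omega
    simp only [Bool.not_false]
    simp [e]; push_cast; ring

def trajC (n t : ℕ) : Bool := if t ≤ n then false else decide ((t - (n+1)) / (n+2) % 2 = 0)
def trajR (n t : ℕ) : ℕ := if t ≤ n then t else min ((t - (n+1)) % (n+2)) n
def trajL (n t : ℕ) : ℕ :=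
  if t ≤ n then 0 else (t - (n+1)) / (n+2) + (if (t - (n+1)) % (n+2) = n+1 then 1 else 0)
def traj (n t : ℕ) : Fin (2*n+1) → Bool := stState n (trajC n t) (trajR n t) (trajL n t)

lemma traj_zero (n : ℕ) : traj n 0 = (fun _ => false) := by
  funext i
  simp only [traj, trajC, trajR, trajL, if_pos (Nat.zero_le n), stState]
  by_cases h1 : i.val < n
  · rw [if_pos h1]; simp; omega
  · rw [if_neg h1]
    by_cases h2 : i.val = n
    · rw [if_pos h2]
    · rw [if_neg h2, if_neg (by omega)]

lemma trajC_gt (n t' : ℕ) : trajC n (t' + (n+1)) = decide (t'/(n+2) % 2 = 0) := by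
  simp only [trajC]
  rw [if_neg (by omega), Nat.add_sub_cancel]

lemma trajR_gt (n t' : ℕ) : trajR n (t' + (n+1)) = min (t' % (n+2)) n := by
  simp only [trajR]
  rw [if_neg (by omega), Nat.add_sub_cancel]

lemma trajL_gt (n t' : ℕ) :
    trajL n (t' + (n+1)) = t'/(n+2) + (if t' % (n+2) = n+1 then 1 else 0) := by
  simp only [trajL]
  rw [if_neg (by omega), Nat.add_sub_cancel]

lemma key (n t : ℕ) (ht : t < n^2 + 4*n + 1) :
    (∃! i, traj n (t+1) i ≠ traj n t i) ∧
    starFitness n (traj n (t+1)) = starFitness n (traj n t) + 1 := by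
  rcases lt_trichotomy t n with h | h | h
  · -- phase 0 right step
    have e0 : traj n t = stState n false t 0 := by
      simp only [traj, trajC, trajR, trajL, if_pos (by omega : t ≤ n)]
    have e1 : traj n (t+1) = stState n false (t+1) 0 := by
      simp only [traj, trajC, trajR, trajL, if_pos (by omega : t+1 ≤ n)]
    rw [e0, e1]
    exact step_right n false t 0 h (by omega)
  · -- t = n : first center flip
    have e0 : traj n t = stState n false n 0 := by
      rw [h]
      simp only [traj, trajC, trajR, trajL, if_pos (le_refl n)]
    have e1 : traj n (t+1) = stState n true 0 0 := by
      have h0 : t + 1 = 0 + (n+1) := by omega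
      rw [traj, h0, trajC_gt, trajR_gt, trajL_gt]
      norm_num
    rw [e0, e1]
    have := step_flip n false 0 (by omega) (by norm_num)
    simpa using this
  · -- t > n
    obtain ⟨t', rfl⟩ : ∃ t', t = t' + (n+1) := ⟨t - (n+1), by omega⟩
    obtain ⟨q, r, hqr, hr2⟩ : ∃ q r, (n+2)*q + r = t' ∧ r < n+2 :=
      ⟨t'/(n+2), t' % (n+2), Nat.div_add_mod t' (n+2), Nat.mod_lt _ (by omega)⟩
    have hdiv : t'/(n+2) = q := by
      rw [← hqr, Nat.mul_add_div (by omega), Nat.div_eq_of_lt hr2, Nat.add_zero]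
    have hmod : t' % (n+2) = r := by
      rw [← hqr, Nat.mul_add_mod, Nat.mod_eq_of_lt hr2]
    have hql : q ≤ n := by
      have h1 : t'/(n+2) < n+1 := by
        apply (Nat.div_lt_iff_lt_mul (by omega : 0 < n+2)).mpr
        nlinarith
      omega
    have hqn : q = n → r < n := by
      intro hh
      rw [hh] at hqr
      by_contra hcon
      push_neg at hcon
      nlinarith
    have hstep : (t' + (n+1)) + 1 = (t'+1) + (n+1) := by omega
    rw [hstep]
    have hE0 : traj n (t' + (n+1)) = stState n (decide (q % 2 = 0)) (min r n)
        (q + (if r = n+1 then 1 else 0)) := by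
      rw [traj, trajC_gt, trajR_gt, trajL_gt, hdiv, hmod]
    rcases (by omega : r < n ∨ r = n ∨ r = n+1) with hr | hr | hr
    · -- right step
      have hdiv1 : (t'+1)/(n+2) = q := by
        rw [show t'+1 = (n+2)*q + (r+1) by omega, Nat.mul_add_div (by omega),
          Nat.div_eq_of_lt (by omega), Nat.add_zero]
      have hmod1 : (t'+1) % (n+2) = r+1 := by
        rw [show t'+1 = (n+2)*q + (r+1) by omega, Nat.mul_add_mod,
          Nat.mod_eq_of_lt (by omega)]
      have hE1 : traj n ((t'+1) + (n+1)) = stState n (decide (q % 2 = 0)) (r+1) q := by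
        rw [traj, trajC_gt, trajR_gt, trajL_gt, hdiv1, hmod1]
        rw [min_eq_left (by omega), if_neg (by omega)]
        simp only [Nat.add_zero]
      rw [hE0, hE1, min_eq_left (by omega), if_neg (by omega)]
      simp only [Nat.add_zero]
      exact step_right n _ r q hr hql
    · -- left step
      have hqltn : q < n := by
        by_contra hcon
        have hq' : q = n := by omega
        have := hqn hq'
        omega
      have hdiv1 : (t'+1)/(n+2) = q := by
        rw [show t'+1 = (n+2)*q + (r+1) by omega, Nat.mul_add_div (by omega),
          Nat.div_eq_of_lt (by omega), Nat.add_zero]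
      have hmod1 : (t'+1) % (n+2) = n+1 := by
        rw [show t'+1 = (n+2)*q + (r+1) by omega, Nat.mul_add_mod,
          Nat.mod_eq_of_lt (by omega)]
        omega
      have hE1 : traj n ((t'+1) + (n+1)) = stState n (decide (q % 2 = 0)) n (q+1) := by
        rw [traj, trajC_gt, trajR_gt, trajL_gt, hdiv1, hmod1]
        rw [min_eq_right (by omega), if_pos rfl]
      have hE0' : traj n (t' + (n+1)) = stState n (decide (q % 2 = 0)) n q := by
        rw [hE0, hr, min_self, if_neg (by omega)]
        simp only [Nat.add_zero]
      rw [hE0', hE1]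
      exact step_left n _ q hqltn rfl
    · -- center flip
      have hqltn : q < n := by
        by_contra hcon
        have hq' : q = n := by omega
        have := hqn hq'
        omega
      have hexp : (n+2)*(q+1) = (n+2)*q + (n+2) := by ring
      have hdiv1 : (t'+1)/(n+2) = q+1 := by
        rw [show t'+1 = (n+2)*(q+1) by omega,
          Nat.mul_div_cancel_left _ (by omega : 0 < n+2)]
      have hmod1 : (t'+1) % (n+2) = 0 := by
        rw [show t'+1 = (n+2)*(q+1) by omega, Nat.mul_mod_right]
      have hpar : decide ((q+1) % 2 = 0) = !decide (q % 2 = 0) := by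
        by_cases hp : q % 2 = 0
        · have h2 : (q+1) % 2 = 1 := by omega
          simp [hp, h2]
        · have h1 : q % 2 = 1 := by omega
          have h2 : (q+1) % 2 = 0 := by omega
          simp [h1, h2]
      have hE1 : traj n ((t'+1) + (n+1)) = stState n (!decide (q % 2 = 0)) 0 (q+1) := by
        rw [traj, trajC_gt, trajR_gt, trajL_gt, hdiv1, hmod1, hpar]
        rw [min_eq_left (by omega), if_neg (by omega)]
      have hE0' : traj n (t' + (n+1)) = stState n (decide (q % 2 = 0)) n (q+1) := by
        rw [hE0, hr, min_eq_right (by omega), if_pos rfl]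
      rw [hE0', hE1]
      refine step_flip n _ (q+1) (by omega) ?_
      by_cases hp : q % 2 = 0
      · have h2 : (q+1) % 2 = 1 := by omega
        simp [hp, h2]
      · have h2 : ¬ ((q+1) % 2 = 1) := by omega
        simp [hp, h2]

/-- There is a strictly increasing step-sequence from the all-zeros assignment
of length `n² + 4n + 1` in the star VCSP, gaining fitness exactly 1 per step. -/
theorem star_long_ascent (n : ℕ) :
    ∃ x : ℕ → (Fin (2 * n + 1) → Bool),
      x 0 = (fun _ => false) ∧
      (∀ t < n ^ 2 + 4 * n + 1, ∃! i, x (t + 1) i ≠ x t i) ∧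
      (∀ t < n ^ 2 + 4 * n + 1, starFitness n (x (t + 1)) = starFitness n (x t) + 1) := by
  exact ⟨traj n, traj_zero n, fun t ht => (key n t ht).1, fun t ht => (key n t ht).2⟩
end

section
/- For the star VCSP fitness f defined on 2n+1 Boolean variables as above, the maximum fitness value equals n² + 4n + 1 (achieved from starting fitness 0 at the all-zeros assignment by a length-(n²+4n+1) ascent increasing by 1 per step). -/
theorem Fin.sum_ite_sub_succ_mod_two {M : Type*} [AddCommMonoid M] (a b : M) (n : ℕ) :
    ∑ u : Fin n, (if (n - (u + 1)) % 2 = 0 then a else b)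
      = ((n + 1) / 2) • a + (n / 2) • b := by
  induction n with
  | zero => simp
  | succ n ih =>
    rw [Fin.sum_univ_succ]
    simp only [Fin.val_zero, Fin.val_succ, Nat.add_sub_add_right, Nat.add_sub_cancel, ih]
    rcases Nat.even_or_odd' n with ⟨m, rfl | rfl⟩
    · rw [if_pos (by omega), show (2 * m + 1 + 1) / 2 = m + 1 by omega,
        show (2 * m + 1) / 2 = m by omega, show 2 * m / 2 = m by omega]
      simp only [succ_nsmul]; abel
    · rw [if_neg (by omega), show (2 * m + 1 + 1 + 1) / 2 = m + 1 by omega,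
        show (2 * m + 1 + 1) / 2 = m + 1 by omega, show (2 * m + 1) / 2 = m by omega]
      simp only [succ_nsmul]; abel

def starCenterMax (n : ℕ) (c : Bool) : ℤ :=
  2 * n + (if c then (n : ℤ) + 1 else 0)
    + (2 * n + 2) * ((if c then n / 2 else (n + 1) / 2 : ℕ) : ℤ)

theorem starFitness_le_starCenterMax (n : ℕ) (x : Fin (2 * n + 1) → Bool) :
    starFitness n x ≤ starCenterMax n (x ⟨n, by omega⟩) := by
  set c := x ⟨n, by omega⟩
  calc starFitness n x
      ≤ ∑ _w : Fin n, 1 + (if c then (n : ℤ) + 1 else 0)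
        + ∑ u : Fin n, (if (n - (u.val + 1)) % 2 = 0 then (if c then 0 else 2 * (n : ℤ) + 2)
            else (if c then 2 * (n : ℤ) + 2 else 0))
        + ∑ _u : Fin n, 1 := by
        unfold starFitness
        gcongr
        all_goals split_ifs <;> simp_all [c] <;> omega
    _ = starCenterMax n c := by
        rw [Fin.sum_ite_sub_succ_mod_two]
        cases c <;> simp only [starCenterMax, Finset.sum_const, Finset.card_univ, Fintype.card_fin,
          nsmul_eq_mul, smul_zero, Bool.false_eq_true, if_true, if_false] <;> push_cast <;> ring

theorem starCenterMax_le (n : ℕ) (c : Bool) :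
    starCenterMax n c ≤ (n : ℤ) ^ 2 + 4 * n + 1 := by
  rcases Nat.even_or_odd' n with ⟨m, rfl | rfl⟩
  · have h₁ : 2 * m / 2 = m := by omega
    have h₂ : (2 * m + 1) / 2 = m := by omega
    cases c <;> simp only [starCenterMax, h₁, h₂, Bool.false_eq_true, if_true, if_false] <;>
      push_cast <;> nlinarith
  · have h₁ : (2 * m + 1) / 2 = m := by omega
    have h₂ : (2 * m + 1 + 1) / 2 = m + 1 := by omega
    cases c <;> simp only [starCenterMax, h₁, h₂, Bool.false_eq_true, if_true, if_false] <;>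
      push_cast <;> nlinarith

theorem starCenterMax_decide_even (n : ℕ) :
    starCenterMax n (decide (Even n)) = (n : ℤ) ^ 2 + 4 * n + 1 := by
  rcases Nat.even_or_odd' n with ⟨m, rfl | rfl⟩
  · have h : 2 * m / 2 = m := by omega
    simp only [starCenterMax, h, even_two_mul, decide_true, if_true]
    push_cast; ring
  · have h : (2 * m + 1 + 1) / 2 = m + 1 := by omega
    simp only [starCenterMax, h, Nat.not_even_two_mul_add_one, decide_false, Bool.false_eq_true,
      if_false]
    push_cast; ring

def starAssignment (n : ℕ) (c : Bool) (i : Fin (2 * n + 1)) : Bool :=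
  if i.val < n then true else if i.val = n then c else !c

theorem starFitness_starAssignment (n : ℕ) (c : Bool) :
    starFitness n (starAssignment n c) = starCenterMax n c := by
  have hL (u : Fin n) : starAssignment n c ⟨u, by omega⟩ = true := by simp [starAssignment]
  have hc : starAssignment n c ⟨n, by omega⟩ = c := by simp [starAssignment]
  have hR (w : Fin n) : starAssignment n c ⟨n + 1 + w, by omega⟩ = !c := by
    simp only [starAssignment]; rw [if_neg (by omega), if_neg (by omega)]
  simp only [starFitness, hL, hc, hR]
  cases c <;> simp only [Fin.sum_ite_sub_succ_mod_two, starCenterMax, Finset.sum_const,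
    Finset.card_univ, Fintype.card_fin, nsmul_eq_mul, smul_zero, Bool.not_true, Bool.not_false,
    ne_eq, Bool.false_eq_true, Bool.true_eq_false, not_false_eq_true, and_true, and_false, if_true,
    if_false] <;> push_cast <;> ring

/-- The maximum fitness value of the star VCSP equals `n² + 4n + 1`. -/
theorem star_max_fitness (n : ℕ) :
    IsGreatest (Set.range (starFitness n)) ((n : ℤ) ^ 2 + 4 * n + 1) := by
  refine ⟨⟨starAssignment n (decide (Even n)), ?_⟩, ?_⟩
  · rw [starFitness_starAssignment, starCenterMax_decide_even]
  · rintro _ ⟨x, rfl⟩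
    exact (starFitness_le_starCenterMax n x).trans (starCenterMax_le n _)
end

section
/- Let p = x⁰,…,x^T be a strictly fitness-increasing step-sequence for a fitness function f on Fin n → Bool, and let k ∈ Fin n. Suppose that during steps t through s (t ≤ s), no step-index lies in a set S containing k, and that f decomposes as f(x) = g(x restricted to S) + h(x restricted to the complement of {k}) for functions g, h (i.e., variable k only interacts with variables in S). Then variable k flips at most once between steps t and s. -/
/-- If during steps `t,…,s-1` of a strictly increasing step-sequence no
step-index lies in `S \ {k}`, and the fitness decomposes as
`f x = g (x|S) + h (x|≠k)` (variable `k` interacts only with variables in the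
set `S` containing it), then variable `k` flips at most once between `t`
and `s`. -/
theorem unary_interval_one_flip (n : ℕ) (f : (Fin n → Bool) → ℤ)
    (x : ℕ → (Fin n → Bool)) (idx : ℕ → Fin n)
    (S : Finset (Fin n)) (k : Fin n) (hk : k ∈ S)
    (g : ({i : Fin n // i ∈ S} → Bool) → ℤ)
    (h : ({i : Fin n // i ≠ k} → Bool) → ℤ)
    (hf : ∀ y, f y = g (fun i => y i.1) + h (fun i => y i.1))
    (t s : ℕ) (hts : t ≤ s)
    (hstep : ∀ τ, t ≤ τ → τ < s → ∀ i, x (τ + 1) i ≠ x τ i ↔ i = idx τ)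
    (hinc : ∀ τ, t ≤ τ → τ < s → f (x τ) < f (x (τ + 1)))
    (hS : ∀ τ, t ≤ τ → τ < s → idx τ = k ∨ idx τ ∉ S) :
    (Finset.filter (fun τ => idx τ = k) (Finset.Ico t s)).card ≤ 1 := by
  set F := Finset.filter (fun τ => idx τ = k) (Finset.Ico t s) with hFdef
  have hFmem : ∀ τ, τ ∈ F ↔ (t ≤ τ ∧ τ < s) ∧ idx τ = k := by
    intro τ; simp [hFdef, Finset.mem_filter, Finset.mem_Ico, and_assoc]
  -- variables in S other than k never change during [t,s]
  have const : ∀ i : Fin n, i ∈ S → i ≠ k → ∀ τ, t ≤ τ → τ ≤ s → x τ i = x t i := by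
    intro i hiS hik τ htτ
    induction τ, htτ using Nat.le_induction with
    | base => intro _; rfl
    | succ τ hτ ih =>
      intro hτs
      have hidx : i ≠ idx τ := by
        rcases hS τ hτ (by omega) with h1 | h1
        · rw [h1]; exact hik
        · intro he; exact h1 (he ▸ hiS)
      have : ¬ (x (τ + 1) i ≠ x τ i) := by
        rw [hstep τ hτ (by omega) i]; exact hidx
      rw [not_not.mp this]; exact ih (by omega)
  -- the g-value as a function of the bit at k
  set G : Bool → ℤ := fun b => g (fun i => if i.1 = k then b else x t i.1) with hGdef
  have gval : ∀ τ, t ≤ τ → τ ≤ s →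
      g (fun i : {i : Fin n // i ∈ S} => x τ i.1) = G (x τ k) := by
    intro τ h1 h2
    have : (fun i : {i : Fin n // i ∈ S} => x τ i.1)
        = (fun i => if i.1 = k then x τ k else x t i.1) := by
      funext i
      by_cases hik : i.1 = k
      · simp [hik]
      · simp [hik, const i.1 i.2 hik τ h1 h2]
    rw [this]
  -- at each k-step, G strictly increases when flipping k
  have kstep : ∀ τ, t ≤ τ → τ < s → idx τ = k →
      x (τ + 1) k = ! x τ k ∧ G (x τ k) < G (! x τ k) := by
    intro τ h1 h2 hkτ
    have hx : x (τ + 1) k ≠ x τ k := (hstep τ h1 h2 k).mpr hkτ.symm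
    have hnot : x (τ + 1) k = ! x τ k := by
      cases hb : x (τ + 1) k <;> cases hc : x τ k <;> simp_all
    refine ⟨hnot, ?_⟩
    have hh : (fun i : {i : Fin n // i ≠ k} => x (τ + 1) i.1)
        = fun i => x τ i.1 := by
      funext i
      have : ¬ (x (τ + 1) i.1 ≠ x τ i.1) := by
        rw [hstep τ h1 h2 i.1, hkτ]; exact i.2
      exact not_not.mp this
    have hlt := hinc τ h1 h2
    rw [hf, hf, hh, gval τ h1 (le_of_lt h2), gval (τ + 1) (by omega) (by omega),
      hnot] at hlt
    linarith
  -- main argument: no two k-steps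
  have key : ∀ a b, a ∈ F → b ∈ F → a < b → False := by
    intro a b haF hbF hab
    obtain ⟨⟨hat, has⟩, hak⟩ := (hFmem a).mp haF
    -- take the least k-step strictly greater than a
    set F' := F.filter (fun τ => a < τ) with hF'def
    have hbF' : b ∈ F' := by simp [hF'def, Finset.mem_filter, hbF, hab]
    set τ2 := F'.min' ⟨b, hbF'⟩ with hτ2def
    have hτ2F' : τ2 ∈ F' := Finset.min'_mem _ _
    obtain ⟨hτ2F, haτ2⟩ := Finset.mem_filter.mp hτ2F'
    obtain ⟨⟨hτ2t, hτ2s⟩, hτ2k⟩ := (hFmem τ2).mp hτ2F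
    have hmin : ∀ u, u ∈ F → a < u → τ2 ≤ u := by
      intro u huF hau
      exact Finset.min'_le _ _ (by simp [hF'def, Finset.mem_filter, huF, hau])
    -- between a+1 and τ2, k never flips
    have prop : ∀ u, a + 1 ≤ u → u ≤ τ2 → x u k = x (a + 1) k := by
      intro u h1
      induction u, h1 using Nat.le_induction with
      | base => intro _; rfl
      | succ u hu ih =>
        intro hus
        have huk : idx u ≠ k := by
          intro he
          have huF : u ∈ F := (hFmem u).mpr ⟨⟨by omega, by omega⟩, he⟩
          have := hmin u huF (by omega)
          omega
        have : ¬ (x (u + 1) k ≠ x u k) := by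
          rw [hstep u (by omega) (by omega) k]
          intro he; exact huk he.symm
        rw [not_not.mp this]; exact ih (by omega)
    obtain ⟨hflip1, hG1⟩ := kstep a hat has hak
    obtain ⟨hflip2, hG2⟩ := kstep τ2 hτ2t hτ2s hτ2k
    have hx2 : x τ2 k = ! x a k := by
      rw [prop τ2 (by omega) le_rfl, hflip1]
    rw [hx2, Bool.not_not] at hG2
    linarith
  by_contra hcard
  push_neg at hcard
  obtain ⟨a, ha, b, hb, hne⟩ := Finset.one_lt_card.mp hcard
  rcases lt_or_gt_of_ne hne with hlt | hgt
  · exact key a b ha hb hlt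
  · exact key b a hb ha hgt
end

section
/- Let n ≥ 1 and d ≥ 0, and suppose for each block of d+1 Boolean variables there is a fitness function g : (Fin (d+1) → Bool) → ℤ such that every strictly increasing step-sequence from the all-zeros assignment to a local maximum of g has length at least L. Define f on Fin (m·(d+1)) → Bool (m blocks) as the sum of g applied to each block. Then every strictly increasing step-sequence from the all-zeros assignment of f to a local maximum of f has length at least m·L. -/
/-- The index of the `j`-th variable of the `b`-th block, when `m·(d+1)`
variables are split into `m` blocks of `d+1`. -/
def blockIdx (m d : ℕ) (b : Fin m) (j : Fin (d + 1)) : Fin (m * (d + 1)) :=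
  ⟨b.val * (d + 1) + j.val, by
    have hb := b.isLt; have hj := j.isLt
    calc b.val * (d + 1) + j.val < b.val * (d + 1) + (d + 1) := by omega
      _ = (b.val + 1) * (d + 1) := by ring
      _ ≤ m * (d + 1) := Nat.mul_le_mul_right _ hb⟩

def bOf (m d : ℕ) (i : Fin (m * (d + 1))) : Fin m :=
  ⟨i.val / (d + 1), (Nat.div_lt_iff_lt_mul (Nat.succ_pos d)).mpr i.isLt⟩

def jOf (m d : ℕ) (i : Fin (m * (d + 1))) : Fin (d + 1) :=
  ⟨i.val % (d + 1), Nat.mod_lt _ (Nat.succ_pos d)⟩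

lemma blockIdx_bOf_jOf (m d : ℕ) (i : Fin (m * (d + 1))) :
    blockIdx m d (bOf m d i) (jOf m d i) = i := by
  apply Fin.ext
  simp only [blockIdx, bOf, jOf]; exact Nat.div_add_mod' i.val (d+1)

lemma bOf_blockIdx (m d : ℕ) (b : Fin m) (j : Fin (d + 1)) :
    bOf m d (blockIdx m d b j) = b := by
  apply Fin.ext
  simp only [blockIdx, bOf]
  rw [Nat.mul_comm, Nat.mul_add_div (Nat.succ_pos d), Nat.div_eq_of_lt j.isLt]; omega

lemma jOf_blockIdx (m d : ℕ) (b : Fin m) (j : Fin (d + 1)) :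
    jOf m d (blockIdx m d b j) = j := by
  apply Fin.ext
  simp only [blockIdx, jOf]
  rw [Nat.mul_comm, Nat.mul_add_mod, Nat.mod_eq_of_lt j.isLt]

/-- If every strictly increasing step-sequence of `g` from all-zeros to a local
maximum of `g` has length at least `L`, then for the sum `f` of `g` over `m`
disjoint blocks, every strictly increasing step-sequence from all-zeros to a
local maximum of `f` has length at least `m * L`. -/
theorem block_sum_ascent_lower_bound (m d L : ℕ) (hm : 1 ≤ m)
    (g : (Fin (d + 1) → Bool) → ℤ)
    (hg : ∀ (T : ℕ) (y : ℕ → (Fin (d + 1) → Bool)),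
      y 0 = (fun _ => false) →
      (∀ t < T, ∃! i, y (t + 1) i ≠ y t i) →
      (∀ t < T, g (y t) < g (y (t + 1))) →
      (∀ z, (∃! i, z i ≠ y T i) → g z ≤ g (y T)) →
      L ≤ T)
    (f : (Fin (m * (d + 1)) → Bool) → ℤ)
    (hf : ∀ x, f x = ∑ b : Fin m, g (fun j => x (blockIdx m d b j)))
    (T : ℕ) (x : ℕ → (Fin (m * (d + 1)) → Bool))
    (hx0 : x 0 = fun _ => false)
    (hstep : ∀ t < T, ∃! i, x (t + 1) i ≠ x t i)
    (hinc : ∀ t < T, f (x t) < f (x (t + 1)))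
    (hmax : ∀ z, (∃! i, z i ≠ x T i) → f z ≤ f (x T)) :
    m * L ≤ T := by
  classical
  -- at each step, exactly one block changes, in exactly one coordinate
  have key : ∀ t, t < T → ∃ b : Fin m,
      (∀ b' : Fin m, b' ≠ b → ∀ j, x (t+1) (blockIdx m d b' j) = x t (blockIdx m d b' j)) ∧
      (∃! j, x (t+1) (blockIdx m d b j) ≠ x t (blockIdx m d b j)) := by
    intro t ht
    obtain ⟨i0, hi0, huniq⟩ := hstep t ht
    refine ⟨bOf m d i0, ?_, ?_⟩
    · intro b' hb' j
      by_contra hne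
      have h1 := huniq _ hne
      apply hb'
      have h2 := bOf_blockIdx m d b' j
      rw [h1] at h2
      exact h2.symm
    · refine ⟨jOf m d i0, ?_, ?_⟩
      · show x (t+1) (blockIdx m d (bOf m d i0) (jOf m d i0)) ≠
            x t (blockIdx m d (bOf m d i0) (jOf m d i0))
        rw [blockIdx_bOf_jOf]
        exact hi0
      · intro j hj
        have h1 := huniq _ hj
        have h2 := jOf_blockIdx m d (bOf m d i0) j
        rw [h1] at h2
        exact h2.symm
  choose chg hchg using key
  set c : ℕ → Fin m := fun t => if h : t < T then chg t h else ⟨0, hm⟩ with hc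
  have hother : ∀ t (ht : t < T), ∀ b' : Fin m, b' ≠ c t →
      ∀ j, x (t+1) (blockIdx m d b' j) = x t (blockIdx m d b' j) := by
    intro t ht b' hb' j
    have hct : c t = chg t ht := dif_pos ht
    exact (hchg t ht).1 b' (by rw [← hct]; exact hb') j
  have hchg' : ∀ t (ht : t < T),
      ∃! j, x (t+1) (blockIdx m d (c t) j) ≠ x t (blockIdx m d (c t) j) := by
    intro t ht
    have hct : c t = chg t ht := dif_pos ht
    rw [hct]
    exact (hchg t ht).2
  -- the g-value of the changing block strictly increases
  have hginc : ∀ t (ht : t < T),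
      g (fun j => x t (blockIdx m d (c t) j)) < g (fun j => x (t+1) (blockIdx m d (c t) j)) := by
    intro t ht
    have h1 := hinc t ht
    rw [hf, hf] at h1
    rw [← Finset.add_sum_erase _ _ (Finset.mem_univ (c t)),
        ← Finset.add_sum_erase _ _ (Finset.mem_univ (c t))] at h1
    have h2 : ∑ b ∈ Finset.univ.erase (c t), g (fun j => x (t+1) (blockIdx m d b j))
            = ∑ b ∈ Finset.univ.erase (c t), g (fun j => x t (blockIdx m d b j)) := by
      apply Finset.sum_congr rfl
      intro b' hb'
      congr 1; funext j
      exact hother t ht b' (Finset.ne_of_mem_erase hb') j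
    rw [h2] at h1
    linarith
  -- each block is a local max of g at time T
  have hgmax : ∀ (b : Fin m) (w : Fin (d+1) → Bool), (∃! j, w j ≠ x T (blockIdx m d b j)) →
      g w ≤ g (fun j => x T (blockIdx m d b j)) := by
    intro b w hw
    obtain ⟨j0, hj0, hju⟩ := hw
    set z : Fin (m*(d+1)) → Bool := fun i => if bOf m d i = b then w (jOf m d i) else x T i with hz
    have hproj : ∀ b' : Fin m, b' ≠ b → ∀ j, z (blockIdx m d b' j) = x T (blockIdx m d b' j) := by
      intro b' hb' j; simp [hz, bOf_blockIdx, hb']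
    have hprojb : ∀ j, z (blockIdx m d b j) = w j := by
      intro j; simp [hz, bOf_blockIdx, jOf_blockIdx]
    have hdiff : ∃! i, z i ≠ x T i := by
      refine ⟨blockIdx m d b j0, ?_, ?_⟩
      · show z (blockIdx m d b j0) ≠ x T (blockIdx m d b j0)
        rw [hprojb j0]; exact hj0
      · intro i hi
        have hbOf : bOf m d i = b := by
          by_contra hne
          exact hi (by simp [hz, hne])
        have hji : jOf m d i = j0 := by
          apply hju
          have h1 : z i = w (jOf m d i) := by simp [hz, hbOf]
          have h2 : x T i = x T (blockIdx m d b (jOf m d i)) := by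
            conv_lhs => rw [← blockIdx_bOf_jOf m d i, hbOf]
          rw [h1, h2] at hi; exact hi
        rw [← blockIdx_bOf_jOf m d i, hbOf, hji]
    have h1 := hmax z hdiff
    rw [hf, hf] at h1
    rw [← Finset.add_sum_erase _ _ (Finset.mem_univ b),
        ← Finset.add_sum_erase _ _ (Finset.mem_univ b)] at h1
    have h2 : ∑ b' ∈ Finset.univ.erase b, g (fun j => z (blockIdx m d b' j))
            = ∑ b' ∈ Finset.univ.erase b, g (fun j => x T (blockIdx m d b' j)) := by
      apply Finset.sum_congr rfl
      intro b' hb'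
      congr 1; funext j
      exact hproj b' (Finset.ne_of_mem_erase hb') j
    rw [h2] at h1
    have h3 : (fun j => z (blockIdx m d b j)) = w := funext hprojb
    rw [h3] at h1
    linarith
  -- constancy of untouched blocks
  have hconst : ∀ (b : Fin m) (a e : ℕ), a ≤ e → e ≤ T →
      (∀ u, a ≤ u → u < e → c u ≠ b) →
      ∀ j, x e (blockIdx m d b j) = x a (blockIdx m d b j) := by
    intro b a e hae
    induction e, hae using Nat.le_induction with
    | base => intro _ _ j; rfl
    | succ n hn ih =>
      intro hT' hno j
      have h1 : x (n+1) (blockIdx m d b j) = x n (blockIdx m d b j) :=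
        hother n (by omega) b (Ne.symm (hno n hn (Nat.lt_succ_self n))) j
      rw [h1]
      exact ih (by omega) (fun u hu1 hu2 => hno u hu1 (by omega)) j
  have hKL : ∀ b : Fin m,
      L ≤ ((Finset.range T).filter (fun t => c t = b)).card := by
    intro b
    set Sb : Finset ℕ := (Finset.range T).filter (fun t => c t = b) with hSb
    have hmemS : ∀ u, u ∈ Sb ↔ (u < T ∧ c u = b) := by
      intro u
      rw [hSb]
      simp [Finset.mem_filter, Finset.mem_range]
    obtain ⟨K, hK⟩ : ∃ K, Sb.card = K := ⟨_, rfl⟩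
    rw [hK]
    set e := Sb.orderIsoOfFin hK with he
    have heT : ∀ k : Fin K, (e k : ℕ) < T := fun k => ((hmemS _).mp (e k).2).1
    have hec : ∀ k : Fin K, c (e k) = b := fun k => ((hmemS _).mp (e k).2).2
    have hmono : ∀ k1 k2 : Fin K, k1 < k2 → ((e k1 : ℕ)) < (e k2 : ℕ) := by
      intro k1 k2 h
      exact e.strictMono h
    have hiff : ∀ k1 k2 : Fin K, (e k1 : ℕ) < (e k2 : ℕ) ↔ k1.val < k2.val := by
      intro k1 k2
      constructor
      · intro h
        by_contra hcon
        push_neg at hcon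
        rcases eq_or_lt_of_le hcon with h2 | h2
        · have : k1 = k2 := Fin.ext h2.symm
          rw [this] at h; omega
        · have := hmono k2 k1 (by exact h2)
          omega
      · intro h
        exact hmono k1 k2 h
    have hsurj : ∀ u, u ∈ Sb → ∃ k : Fin K, (e k : ℕ) = u := by
      intro u hu
      obtain ⟨k, hk⟩ := e.surjective ⟨u, hu⟩
      exact ⟨k, by rw [hk]⟩
    set s : ℕ → ℕ := fun k =>
      if k = 0 then 0 else if h : k - 1 < K then (e ⟨k-1, h⟩ : ℕ) + 1 else T with hs
    set y : ℕ → Fin (d+1) → Bool := fun k j => x (s k) (blockIdx m d b j) with hy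
    have hs0 : s 0 = 0 := rfl
    have hssucc : ∀ k, k ≠ 0 → ∀ (h : k - 1 < K), s k = (e ⟨k-1, h⟩ : ℕ) + 1 := by
      intro k hk h
      simp only [hs]
      rw [if_neg hk, dif_pos h]
    have hsle : ∀ k (hk : k < K), s k ≤ (e ⟨k, hk⟩ : ℕ) := by
      intro k hk
      rcases Nat.eq_zero_or_pos k with h0 | h0
      · subst h0; exact Nat.zero_le _
      · rw [hssucc k (by omega) (by omega)]
        have := hmono ⟨k-1, by omega⟩ ⟨k, hk⟩ (by simp [Fin.lt_def]; omega)
        omega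
    have hgap : ∀ k (hk : k < K) u, s k ≤ u → u < (e ⟨k, hk⟩ : ℕ) → c u ≠ b := by
      intro k hk u hu1 hu2 hcu
      have huS : u ∈ Sb := (hmemS u).mpr ⟨lt_trans hu2 (heT _), hcu⟩
      obtain ⟨k', hk'⟩ := hsurj u huS
      have h2 : k'.val < k := by
        have := (hiff k' ⟨k, hk⟩).mp (by omega)
        simpa using this
      rcases Nat.eq_zero_or_pos k with h0 | h0
      · omega
      · rw [hssucc k (by omega) (by omega)] at hu1
        have h3 : (k:ℕ) - 1 < k'.val := by
          have := (hiff ⟨k-1, by omega⟩ k').mp (by omega)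
          simpa using this
        omega
    have hsKle : s K ≤ T := by
      rcases Nat.eq_zero_or_pos K with h0 | h0
      · simp [hs, h0]
      · rw [hssucc K (by omega) (by omega)]
        exact heT ⟨K-1, by omega⟩
    have hgap2 : ∀ u, s K ≤ u → u < T → c u ≠ b := by
      intro u hu1 hu2 hcu
      have huS : u ∈ Sb := (hmemS u).mpr ⟨hu2, hcu⟩
      obtain ⟨k', hk'⟩ := hsurj u huS
      have h0 : 0 < K := lt_of_le_of_lt (Nat.zero_le _) k'.isLt
      rw [hssucc K (by omega) (by omega)] at hu1
      have h3 : K - 1 < k'.val := by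
        have := (hiff ⟨K-1, by omega⟩ k').mp (by omega)
        simpa using this
      have := k'.isLt
      omega
    have hyk : ∀ k (hk : k < K), y k = fun j => x ((e ⟨k, hk⟩ : ℕ)) (blockIdx m d b j) := by
      intro k hk
      funext j
      exact (hconst b (s k) (e ⟨k, hk⟩) (hsle k hk) (le_of_lt (heT _)) (hgap k hk) j).symm
    have hyK : y K = fun j => x T (blockIdx m d b j) := by
      funext j
      exact (hconst b (s K) T hsKle le_rfl hgap2 j).symm
    apply hg K y
    · funext j
      show x 0 (blockIdx m d b j) = false
      rw [hx0]
    · intro k hk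
      have h1 := hchg' (e ⟨k, hk⟩) (heT _)
      rw [hec ⟨k, hk⟩] at h1
      have h2 : y (k+1) = fun j => x ((e ⟨k, hk⟩ : ℕ) + 1) (blockIdx m d b j) := by
        funext j
        simp only [hy]
        rw [hssucc (k+1) (by omega) (by simpa using hk)]
        rfl
      rw [h2, hyk k hk]
      exact h1
    · intro k hk
      have h1 := hginc (e ⟨k, hk⟩) (heT _)
      rw [hec ⟨k, hk⟩] at h1
      have h2 : y (k+1) = fun j => x ((e ⟨k, hk⟩ : ℕ) + 1) (blockIdx m d b j) := by
        funext j
        simp only [hy]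
        rw [hssucc (k+1) (by omega) (by simpa using hk)]
        rfl
      rw [h2, hyk k hk]
      exact h1
    · intro z hz
      rw [hyK] at hz ⊢
      exact hgmax b z hz
  have hcard : T = ∑ b : Fin m, ((Finset.range T).filter (fun t => c t = b)).card := by
    have h := Finset.card_eq_sum_card_fiberwise
      (s := Finset.range T) (t := (Finset.univ : Finset (Fin m))) (f := c)
      (fun t _ => Finset.mem_univ _)
    simpa using h
  calc m * L = ∑ _b : Fin m, L := by
        simp [Finset.sum_const, Finset.card_univ, mul_comm]
    _ ≤ ∑ b : Fin m, ((Finset.range T).filter (fun t => c t = b)).card :=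
        Finset.sum_le_sum (fun b _ => hKL b)
    _ = T := hcard.symm
end

section
/- Let f(x) = ∑_S C_S(x[S]) be a VCSP fitness on x : Π_i D_i and let k be a variable. Define f_{-k}(y) = ∑_{S ∌ k} C_S(y[S]) + max_{a ∈ D_k} ∑_{S ∋ k} C_S(a, y[S\{k}]) on assignments y over indices other than k. If x and x' are adjacent with step-index i ∉ NS(k) (i not in any scope containing k, and i ≠ k), then f(x') - f(x) = f_{-k}(x'[-k]) - f_{-k}(x[-k]), where x[-k] denotes x restricted to indices other than k. -/
open Finset Function

theorem Function.update_eq_of_eq_off {α : Type*} {β : α → Type*} [DecidableEq α]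
    {x x' : ∀ j, β j} {i : α} (hadj : ∀ j, j ≠ i → x' j = x j) (k : α) (a : β k) :
    ∀ j, j ≠ i → update x' k a j = update x k a j := by
  intro j hj
  rcases eq_or_ne j k with rfl | hjk
  · simp
  · simp [update_of_ne hjk, hadj j hj]

theorem sum_constraints_eq_of_eq_off {n : ℕ} {D : Fin n → Type} {ι : Type}
    {scope : ι → Finset (Fin n)} {C : ι → (∀ i, D i) → ℤ}
    (hdep : ∀ c, ∀ x y : ∀ i, D i, (∀ i ∈ scope c, x i = y i) → C c x = C c y)
    {s : Finset ι} {i : Fin n} (hi : ∀ c ∈ s, i ∉ scope c)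
    {x x' : ∀ j, D j} (hadj : ∀ j, j ≠ i → x' j = x j) :
    ∑ c ∈ s, C c x' = ∑ c ∈ s, C c x :=
  sum_congr rfl fun c hc => hdep c x' x fun j hj => hadj j (by rintro rfl; exact hi c hc hj)

theorem smoothing_step_outside_NS_general {n : ℕ} (D : Fin n → Type) (k : Fin n)
    [Fintype (D k)] [Nonempty (D k)]
    {ι : Type} [Fintype ι]
    (scope : ι → Finset (Fin n)) (C : ι → (∀ i, D i) → ℤ)
    (hdep : ∀ c, ∀ x y : ∀ i, D i, (∀ i ∈ scope c, x i = y i) → C c x = C c y)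
    (f fmk : (∀ i, D i) → ℤ)
    (hf : ∀ x, f x = ∑ c, C c x)
    (hfmk : ∀ x, fmk x =
      (∑ c ∈ Finset.univ.filter (fun c => k ∉ scope c), C c x)
      + Finset.univ.sup' Finset.univ_nonempty (fun a : D k =>
          ∑ c ∈ Finset.univ.filter (fun c => k ∈ scope c),
            C c (Function.update x k a)))
    (x x' : ∀ i, D i) (i : Fin n)
    (hiNS : ∀ c, k ∈ scope c → i ∉ scope c)
    (hadj : ∀ j, j ≠ i → x' j = x j) :
    f x' - f x = fmk x' - fmk x := by
  have hNS : ∀ c ∈ univ.filter (fun c => k ∈ scope c), i ∉ scope c :=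
    fun c hc => hiNS c (mem_filter.mp hc).2
  have hin := sum_constraints_eq_of_eq_off hdep hNS hadj
  have hmax : univ.sup' univ_nonempty (fun a : D k =>
        ∑ c ∈ univ.filter (fun c => k ∈ scope c), C c (update x' k a))
      = univ.sup' univ_nonempty (fun a : D k =>
        ∑ c ∈ univ.filter (fun c => k ∈ scope c), C c (update x k a)) :=
    sup'_congr _ rfl fun a _ =>
      sum_constraints_eq_of_eq_off hdep hNS (update_eq_of_eq_off hadj k a)
  have hsplit (y : ∀ i, D i) : ∑ c, C c y =
      ∑ c ∈ univ.filter (fun c => k ∈ scope c), C c y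
        + ∑ c ∈ univ.filter (fun c => k ∉ scope c), C c y :=
    (sum_filter_add_sum_filter_not _ _ _).symm
  rw [hf, hf, hfmk, hfmk, hsplit x', hsplit x, hin, hmax]
  ring

/-- Smoothing out variable `k` of a VCSP: if `x` and `x'` are adjacent with
step-index `i ∉ NS(k)` (so `i ≠ k` and `i` lies in no scope containing `k`),
then the fitness difference of `f` equals that of the smoothed fitness
`f₋ₖ`, which replaces all constraints containing `k` by their maximum over
the value of variable `k`. -/
theorem smoothing_step_outside_NS {n : ℕ} (D : Fin n → Type) (k : Fin n)
    [Fintype (D k)] [Nonempty (D k)]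
    {ι : Type} [Fintype ι]
    (scope : ι → Finset (Fin n)) (C : ι → (∀ i, D i) → ℤ)
    (hdep : ∀ c, ∀ x y : ∀ i, D i, (∀ i ∈ scope c, x i = y i) → C c x = C c y)
    (f fmk : (∀ i, D i) → ℤ)
    (hf : ∀ x, f x = ∑ c, C c x)
    (hfmk : ∀ x, fmk x =
      (∑ c ∈ Finset.univ.filter (fun c => k ∉ scope c), C c x)
      + Finset.univ.sup' Finset.univ_nonempty (fun a : D k =>
          ∑ c ∈ Finset.univ.filter (fun c => k ∈ scope c),
            C c (Function.update x k a)))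
    (x x' : ∀ i, D i) (i : Fin n) (hik : i ≠ k)
    (hiNS : ∀ c, k ∈ scope c → i ∉ scope c)
    (hadj : ∀ j, j ≠ i → x' j = x j) :
    f x' - f x = fmk x' - fmk x :=
  smoothing_step_outside_NS_general D k scope C hdep f fmk hf hfmk x x' i hiNS hadj
end
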